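/- arXiv:1401.4092 — 4 statements merged into one kernel-verified Lean document; each statement's English description precedes it below -/
import Mathlib

section
/- Main impossibility result (Theorem 3.1). Fix a number of players n ≥ 1, a mechanism M = (M_out, M_pay), and nonnegative privacy loss functions λ_1, …, λ_n (i.e., λ_i ≥ 0 everywhere). Suppose each λ_i respects indifference and is increasing for δ-distinguishability for some δ ≤ 1/(6n). Suppose M is individually rational; M has finite payments when all players are privacy-indifferent, i.e., Pay_i(b, 0^n) is finite for all b ∈ {0,1}^n and all i; and M is truthful for every input (b,v) and player i with v_i = 0. Then M is not (1/2, 1/3)-accurate on both of the inputs (0^n, 0^n) and (1^n, 0^n). -/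
open MeasureTheory
open scoped ENNReal

noncomputable section

attribute [local instance] Classical.propDecidable

/-- Expectation of a real-valued function under a `PMF`. -/
def PMF.expect {α : Type*} [MeasurableSpace α] (p : PMF α) (f : α → ℝ) : ℝ :=
  ∫ x, f x ∂p.toMeasure

/-- Total variation (statistical) distance between two distributions:
`Δ(p,q) = sup_S |p(S) - q(S)|`. -/
def tvDist {α : Type*} (p q : PMF α) : ℝ :=
  ⨆ S : Set α, |(p.toOuterMeasure S).toReal - (q.toOuterMeasure S).toReal|

/-- A mechanism on `n` players: a randomized function producing an integer output
(an estimate of the sum of the data bits) together with payments to the `n` players. -/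
structure Mech (n : ℕ) where
  run : (Fin n → Bool) → (Fin n → ℝ) → PMF (ℤ × (Fin n → ℝ))

namespace Mech

variable {n : ℕ}

/-- The output part `M_out`. -/
def out (M : Mech n) (b : Fin n → Bool) (v : Fin n → ℝ) : PMF ℤ :=
  (M.run b v).map Prod.fst

/-- The payment part `M_pay`. -/
def payPMF (M : Mech n) (b : Fin n → Bool) (v : Fin n → ℝ) : PMF (Fin n → ℝ) :=
  (M.run b v).map Prod.snd

/-- `Pay_i(b,v)`: the expected payment to player `i`. -/
def pay (M : Mech n) (b : Fin n → Bool) (v : Fin n → ℝ) (i : Fin n) : ℝ :=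
  (M.payPMF b v).expect (fun p => p i)

/-- `M_{-i}`: the output together with the payments to all players other than `i`. -/
def minus (M : Mech n) (i : Fin n) (b : Fin n → Bool) (v : Fin n → ℝ) :
    PMF (ℤ × ({j : Fin n // j ≠ i} → ℝ)) :=
  (M.run b v).map (fun sp => (sp.1, fun j => sp.2 j.1))

end Mech

/-- The type of privacy loss functions `λ_i(b, v, v'_i, s, p_{-i})` for player `i`. -/
abbrev LossFn (n : ℕ) (i : Fin n) : Type :=
  (Fin n → Bool) → (Fin n → ℝ) → ℝ → ℤ → ({j : Fin n // j ≠ i} → ℝ) → ℝ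

/-- `Loss_i(b, v, v'_i)`: the expected privacy loss of player `i` with true types `(b,v)`
and declaration `v'_i`. -/
def lossOf {n : ℕ} (M : Mech n) {i : Fin n} (lam : LossFn n i)
    (b : Fin n → Bool) (v : Fin n → ℝ) (v'i : ℝ) : ℝ :=
  (M.run b (Function.update v i v'i)).expect
    (fun sp => lam b v v'i sp.1 (fun j => sp.2 j.1))

/-- `i`-neighbors: inputs agreeing in all coordinates `j ≠ i`. -/
def iNeighbor {n : ℕ} (i : Fin n) (x y : (Fin n → Bool) × (Fin n → ℝ)) : Prop :=
  ∀ j, j ≠ i → x.1 j = y.1 j ∧ x.2 j = y.2 j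

/-- Neighbors: `i`-neighbors for some `i`. -/
def Neighbor {n : ℕ} (x y : (Fin n → Bool) × (Fin n → ℝ)) : Prop :=
  ∃ i, iNeighbor i x y

/-- Monotonically related player types. -/
def monRelated (t t' : Bool × ℝ) : Prop :=
  (t.1 = false ∧ t'.1 = true ∧ t.2 ≤ t'.2) ∨ (t.1 = true ∧ t'.1 = false ∧ t'.2 ≤ t.2)

/-- Monotonic `i`-neighbors. -/
def monINeighbor {n : ℕ} (i : Fin n) (x y : (Fin n → Bool) × (Fin n → ℝ)) : Prop :=
  iNeighbor i x y ∧ monRelated (x.1 i, x.2 i) (y.1 i, y.2 i)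

/-- `(b,v)` is `δ`-distinguishable for player `i` with respect to `f`. -/
def distinguishable {n : ℕ} {α : Type*} (δ : ℝ)
    (f : (Fin n → Bool) → (Fin n → ℝ) → PMF α) (i : Fin n)
    (b : Fin n → Bool) (v : Fin n → ℝ) : Prop :=
  ∃ y : (Fin n → Bool) × (Fin n → ℝ), iNeighbor i (b, v) y ∧ δ ≤ tvDist (f b v) (f y.1 y.2)

/-- `(b,v)` is `δ`-monotonically distinguishable for player `i` with respect to `f`. -/
def monDistinguishable {n : ℕ} {α : Type*} (δ : ℝ)
    (f : (Fin n → Bool) → (Fin n → ℝ) → PMF α) (i : Fin n)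
    (b : Fin n → Bool) (v : Fin n → ℝ) : Prop :=
  ∃ y : (Fin n → Bool) × (Fin n → ℝ), monINeighbor i (b, v) y ∧ δ ≤ tvDist (f b v) (f y.1 y.2)

/-- `λ_i` respects indifference. -/
def respectsIndifference {n : ℕ} (M : Mech n) {i : Fin n} (lam : LossFn n i) : Prop :=
  ∀ b v, v i = 0 → ∀ v' v'', lossOf M lam b v v' = lossOf M lam b v v''

/-- `λ_i` is increasing for `δ`-distinguishability. -/
def increasingFor {n : ℕ} (M : Mech n) {i : Fin n} (lam : LossFn n i) (δ : ℝ) : Prop :=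
  ∃ T : ℝ → (Fin n → Bool) → ({j : Fin n // j ≠ i} → ℝ) → ℝ,
    ∀ ℓ, 0 < ℓ → ∀ (b : Fin n → Bool) (v : Fin n → ℝ),
      T ℓ b (fun j => v j.1) ≤ v i →
      distinguishable δ M.out i b v →
      ℓ < lossOf M lam b v (v i)

/-- `λ_i` is increasing for `δ`-monotonic distinguishability. -/
def increasingForMon {n : ℕ} (M : Mech n) {i : Fin n} (lam : LossFn n i) (δ : ℝ) : Prop :=
  ∃ T : ℝ → (Fin n → Bool) → ({j : Fin n // j ≠ i} → ℝ) → ℝ,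
    ∀ ℓ, 0 < ℓ → ∀ (b : Fin n → Bool) (v : Fin n → ℝ),
      T ℓ b (fun j => v j.1) ≤ v i →
      monDistinguishable δ M.out i b v →
      ℓ < lossOf M lam b v (v i)

/-- `M` is individually rational. -/
def indivRational {n : ℕ} (M : Mech n) (lam : ∀ i : Fin n, LossFn n i) : Prop :=
  ∀ b v i, lossOf M (lam i) b v (v i) ≤ M.pay b v i

/-- `M` is truthful for input `(b,v)` and player `i`. -/
def truthfulAt {n : ℕ} (M : Mech n) {i : Fin n} (lam : LossFn n i)
    (b : Fin n → Bool) (v : Fin n → ℝ) : Prop :=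
  ∀ v'i : ℝ,
    M.pay b (Function.update v i v'i) i - lossOf M lam b v v'i ≤
      M.pay b v i - lossOf M lam b v (v i)

/-- The average `b̄` of the data bits. -/
def bbar {n : ℕ} (b : Fin n → Bool) : ℝ := (∑ i, if b i then (1 : ℝ) else 0) / n

/-- `M` is `([a, a'], β)`-accurate on input `(b,v)`. -/
def accurate {n : ℕ} (M : Mech n) (a a' β : ℝ) (b : Fin n → Bool) (v : Fin n → ℝ) : Prop :=
  ((M.out b v).toOuterMeasure
      {s : ℤ | ¬((bbar b - a) * n < (s : ℝ) ∧ (s : ℝ) < (bbar b + a') * n)}).toReal ≤ β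

/-- `G` is the symmetric geometric distribution `Geom(ε)` on `ℤ`, with
`Pr[X = k] = (1-e^{-ε})/(1+e^{-ε}) · e^{-ε|k|}`. -/
def isGeom (ε : ℝ) (G : PMF ℤ) : Prop :=
  ∀ k : ℤ, G k =
    ENNReal.ofReal ((1 - Real.exp (-ε)) / (1 + Real.exp (-ε)) * Real.exp (-ε * |(k : ℝ)|))

/-- The monotonic-valuations mechanism `M_{B,ε}` (Algorithm 1): data bits of players with
`2εv_i > B/n` are treated as 0, the output is the resulting sum plus `Geom(ε)` noise, and
each player with `2εv_i ≤ B/n` is paid `B/n` (others are paid nothing). -/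
def monMech (n : ℕ) (B ε : ℝ) (G : PMF ℤ) : Mech n where
  run b v := G.map (fun x =>
    ((∑ i, if b i = true ∧ 2 * ε * v i ≤ B / n then (1 : ℤ) else 0) + x,
      fun i => if 2 * ε * v i ≤ B / n then B / n else 0))

/-- The modified mechanism `M'` of Theorem 4.3: identical to `M_{B,ε}` except that all
players with data bit 0 are paid `B/n`, even those with large privacy valuations. -/
def monMech' (n : ℕ) (B ε : ℝ) (G : PMF ℤ) : Mech n where
  run b v := G.map (fun x =>
    ((∑ i, if b i = true ∧ 2 * ε * v i ≤ B / n then (1 : ℤ) else 0) + x,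
      fun i => if 2 * ε * v i ≤ B / n ∨ b i = false then B / n else 0))

/-- The log-ratio of point probabilities of `M_{-i}` between `(b,v)` and the input where
player `i`'s type is replaced by `(b''_i, v''_i)`. -/
def logRatio {n : ℕ} (M : Mech n) (i : Fin n) (b : Fin n → Bool) (v : Fin n → ℝ)
    (b''i : Bool) (v''i : ℝ) (s : ℤ) (p : {j : Fin n // j ≠ i} → ℝ) : ℝ :=
  Real.log ((M.minus i b v (s, p)).toReal /
    (M.minus i (Function.update b i b''i) (Function.update v i v''i) (s, p)).toReal)

/-- `λ_i` is bounded by differential privacy for monotonic valuations. -/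
def boundedByDPMon {n : ℕ} (M : Mech n) {i : Fin n} (lam : LossFn n i) : Prop :=
  ∀ b v v'i s p,
    |lam b v v'i s p| ≤
      v i * ⨆ t : {t : Bool × ℝ // monRelated (b i, v i) t},
        logRatio M i b v t.1.1 t.1.2 s p

/-- `λ_i` respects identical output distributions. -/
def respectsIdentical {n : ℕ} (M : Mech n) {i : Fin n} (lam : LossFn n i) : Prop :=
  ∀ b v v'i, M.minus i b v = M.minus i b (Function.update v i v'i) →
    ∀ s p, lam b v v'i s p = lam b v (v i) s p

/-- `λ_i` is growing with statistical distance for monotonic neighbors. -/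
def growingMon {n : ℕ} (M : Mech n) {i : Fin n} (lam : LossFn n i) : Prop :=
  ∀ b v y, monINeighbor i (b, v) y →
    v i * tvDist (M.out b v) (M.out y.1 y.2) ≤ lossOf M lam b v (v i)

/-!
If `M` is accurate on `(0ⁿ, 0ⁿ)` and `(1ⁿ, 0ⁿ)`, these inputs have output distributions at
statistical distance at least `1/3`, so along the hybrid path flipping one bit at a time some
single flip `b ↦ b[i ↦ 1]` moves the output by at least `1/(3n) ≥ 2δ`. By the triangle inequality,
whatever valuation `t` player `i` reports, `(b, 0ⁿ[i ↦ t])` is then `δ`-distinguishable for `i`.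
Taking `t` above the threshold for a loss larger than `Pay_i(b, 0ⁿ)`, individual rationality
forces `Pay_i(b, 0ⁿ[i ↦ t]) > Pay_i(b, 0ⁿ)`, while truthfulness of the indifferent player `i`
(whose loss does not depend on the report) forces the opposite inequality.
-/

section TotalVariation

variable {α : Type*}

lemma PMF.toOuterMeasure_apply_le_one (p : PMF α) (S : Set α) : p.toOuterMeasure S ≤ 1 := by
  rw [PMF.toOuterMeasure_apply, ← p.tsum_coe]
  exact ENNReal.tsum_le_tsum fun x => Set.indicator_le_self _ _ x

lemma PMF.toOuterMeasure_apply_ne_top (p : PMF α) (S : Set α) : p.toOuterMeasure S ≠ ⊤ :=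
  ((p.toOuterMeasure_apply_le_one S).trans_lt ENNReal.one_lt_top).ne

lemma PMF.toOuterMeasure_apply_toReal_le_one (p : PMF α) (S : Set α) :
    (p.toOuterMeasure S).toReal ≤ 1 :=
  ENNReal.toReal_le_of_le_ofReal zero_le_one (by simpa using p.toOuterMeasure_apply_le_one S)

lemma PMF.toOuterMeasure_apply_add_compl (p : PMF α) (S : Set α) :
    p.toOuterMeasure S + p.toOuterMeasure Sᶜ = 1 := by
  rw [PMF.toOuterMeasure_apply, PMF.toOuterMeasure_apply, ← ENNReal.tsum_add, ← p.tsum_coe]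
  congr 1 with x
  by_cases h : x ∈ S <;> simp [Set.indicator, h]

lemma PMF.toOuterMeasure_apply_compl_toReal (p : PMF α) (S : Set α) :
    (p.toOuterMeasure Sᶜ).toReal = 1 - (p.toOuterMeasure S).toReal := by
  have h := congrArg ENNReal.toReal (p.toOuterMeasure_apply_add_compl S)
  rw [ENNReal.toReal_add (p.toOuterMeasure_apply_ne_top S) (p.toOuterMeasure_apply_ne_top Sᶜ),
    ENNReal.toReal_one] at h
  linarith

lemma bddAbove_range_abs_toOuterMeasure_sub (p q : PMF α) :
    BddAbove (Set.range fun S : Set α =>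
      |(p.toOuterMeasure S).toReal - (q.toOuterMeasure S).toReal|) :=
  ⟨1, by
    rintro _ ⟨S, rfl⟩
    exact abs_sub_le_of_nonneg_of_le ENNReal.toReal_nonneg
      (p.toOuterMeasure_apply_toReal_le_one S) ENNReal.toReal_nonneg
      (q.toOuterMeasure_apply_toReal_le_one S)⟩

lemma le_tvDist (p q : PMF α) (S : Set α) :
    |(p.toOuterMeasure S).toReal - (q.toOuterMeasure S).toReal| ≤ tvDist p q :=
  le_ciSup (bddAbove_range_abs_toOuterMeasure_sub p q) S

lemma tvDist_nonneg (p q : PMF α) : 0 ≤ tvDist p q :=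
  (abs_nonneg _).trans (le_tvDist p q ∅)

lemma tvDist_self (p : PMF α) : tvDist p p = 0 :=
  le_antisymm (ciSup_le fun S => by simp) (tvDist_nonneg p p)

lemma tvDist_comm (p q : PMF α) : tvDist p q = tvDist q p := by
  simp only [tvDist, abs_sub_comm]

lemma tvDist_triangle (p q r : PMF α) : tvDist p r ≤ tvDist p q + tvDist q r :=
  ciSup_le fun S => (abs_sub_le _ _ _).trans (add_le_add (le_tvDist p q S) (le_tvDist q r S))

lemma le_tvDist_or_le_tvDist_of_two_mul_le {c : ℝ} {p r : PMF α} (q : PMF α)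
    (h : 2 * c ≤ tvDist p r) : c ≤ tvDist p q ∨ c ≤ tvDist q r := by
  by_contra! hlt
  linarith [tvDist_triangle p q r]

lemma one_sub_add_le_tvDist {p q : PMF α} {S T : Set α} {a b : ℝ} (hST : Sᶜ ⊆ T)
    (hp : (p.toOuterMeasure S).toReal ≤ a) (hq : (q.toOuterMeasure T).toReal ≤ b) :
    1 - (a + b) ≤ tvDist p q := by
  have hqS : (q.toOuterMeasure Sᶜ).toReal ≤ b :=
    (ENNReal.toReal_mono (q.toOuterMeasure_apply_ne_top T) (measure_mono hST)).trans hq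
  have h := le_tvDist p q Sᶜ
  rw [p.toOuterMeasure_apply_compl_toReal] at h
  linarith [le_abs_self (1 - (p.toOuterMeasure S).toReal - (q.toOuterMeasure Sᶜ).toReal)]

lemma tvDist_le_sum_range (q : ℕ → PMF α) (m : ℕ) :
    tvDist (q 0) (q m) ≤ ∑ k ∈ Finset.range m, tvDist (q k) (q (k + 1)) := by
  induction m with
  | zero => simp [tvDist_self]
  | succ m ih =>
    rw [Finset.sum_range_succ]
    linarith [tvDist_triangle (q 0) (q m) (q (m + 1))]

lemma exists_lt_div_le_tvDist_succ (q : ℕ → PMF α) {m : ℕ} (hm : 0 < m) :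
    ∃ k < m, tvDist (q 0) (q m) / m ≤ tvDist (q k) (q (k + 1)) := by
  have hsum : ∑ _k ∈ Finset.range m, tvDist (q 0) (q m) / m ≤
      ∑ k ∈ Finset.range m, tvDist (q k) (q (k + 1)) := by
    rw [Finset.sum_const, Finset.card_range, nsmul_eq_mul, mul_div_cancel₀ _ (by positivity)]
    exact tvDist_le_sum_range q m
  obtain ⟨k, hk, hle⟩ := Finset.exists_le_of_sum_le (Finset.nonempty_range_iff.2 hm.ne') hsum
  exact ⟨k, Finset.mem_range.1 hk, hle⟩

end TotalVariation

section Hybrid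

def prefixBits (n k : ℕ) : Fin n → Bool := fun j => decide ((j : ℕ) < k)

variable {n : ℕ}

lemma prefixBits_zero : prefixBits n 0 = fun _ => false := by
  funext j; simp [prefixBits]

lemma prefixBits_self : prefixBits n n = fun _ => true := by
  funext j; simp [prefixBits]

lemma prefixBits_succ {k : ℕ} (hk : k < n) :
    prefixBits n (k + 1) = Function.update (prefixBits n k) ⟨k, hk⟩ true := by
  funext j
  by_cases hj : j = ⟨k, hk⟩
  · subst hj; simp [prefixBits]
  · have hjk : (j : ℕ) ≠ k := fun h => hj (Fin.ext h)
    simp only [prefixBits, Function.update_of_ne hj, decide_eq_decide]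
    omega

lemma exists_tvDist_update_true_ge {β : Type*} (f : (Fin n → Bool) → PMF β) (hn : 0 < n) :
    ∃ (b : Fin n → Bool) (i : Fin n),
      tvDist (f fun _ => false) (f fun _ => true) / n ≤
        tvDist (f b) (f (Function.update b i true)) := by
  obtain ⟨k, hk, hle⟩ := exists_lt_div_le_tvDist_succ (fun k => f (prefixBits n k)) hn
  refine ⟨prefixBits n k, ⟨k, hk⟩, ?_⟩
  simpa only [prefixBits_zero, prefixBits_self, prefixBits_succ hk] using hle

end Hybrid

section Mechanism

variable {n : ℕ}

lemma bbar_const_false : bbar (fun _ : Fin n => false) = 0 := by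
  simp [bbar]

lemma bbar_const_true (hn : n ≠ 0) : bbar (fun _ : Fin n => true) = 1 := by
  simp [bbar, hn]

lemma one_sub_two_mul_le_tvDist_out_of_accurate {M : Mech n} {v : Fin n → ℝ} {a β : ℝ}
    (hn : n ≠ 0) (ha : a ≤ 1 / 2)
    (h0 : accurate M a a β (fun _ => false) v) (h1 : accurate M a a β (fun _ => true) v) :
    1 - 2 * β ≤ tvDist (M.out (fun _ => false) v) (M.out (fun _ => true) v) := by
  refine le_trans (by linarith) (one_sub_add_le_tvDist (fun s hs => ?_) h0 h1)
  simp only [bbar_const_false, bbar_const_true hn, Set.mem_compl_iff, Set.mem_ofPred_eq,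
    not_not] at hs ⊢
  rintro ⟨hlow, -⟩
  nlinarith [hs.2, (Nat.cast_nonneg n : (0 : ℝ) ≤ n)]

lemma distinguishable_update_of_two_mul_le_tvDist {β : Type*}
    {f : (Fin n → Bool) → (Fin n → ℝ) → PMF β} {δ : ℝ} {i : Fin n} {b : Fin n → Bool}
    {v : Fin n → ℝ} {c : Bool} (h : 2 * δ ≤ tvDist (f b v) (f (Function.update b i c) v))
    (t : ℝ) : distinguishable δ f i b (Function.update v i t) := by
  have neighbor_v : iNeighbor i (b, Function.update v i t) (b, v) :=
    fun j hj => ⟨rfl, Function.update_of_ne hj _ _⟩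
  have neighbor_bc : iNeighbor i (b, Function.update v i t) (Function.update b i c, v) :=
    fun j hj => ⟨(Function.update_of_ne hj _ _).symm, Function.update_of_ne hj _ _⟩
  rcases le_tvDist_or_le_tvDist_of_two_mul_le (f b (Function.update v i t)) h with h' | h'
  · exact ⟨(b, v), neighbor_v, by rwa [tvDist_comm]⟩
  · exact ⟨(Function.update b i c, v), neighbor_bc, h'⟩

lemma pay_update_le_of_truthfulAt {M : Mech n} {i : Fin n} {lam : LossFn n i}
    {b : Fin n → Bool} {v : Fin n → ℝ} (hind : respectsIndifference M lam) (hv : v i = 0)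
    (htr : truthfulAt M lam b v) (t : ℝ) :
    M.pay b (Function.update v i t) i ≤ M.pay b v i := by
  have h := htr t
  rw [hind b v hv t (v i)] at h
  linarith

lemma exists_not_distinguishable_update {M : Mech n} {lam : ∀ i : Fin n, LossFn n i} {δ : ℝ}
    {i : Fin n} {b : Fin n → Bool} {v : Fin n → ℝ} (hIR : indivRational M lam)
    (hind : respectsIndifference M (lam i)) (hincr : increasingFor M (lam i) δ)
    (hv : v i = 0) (htr : truthfulAt M (lam i) b v) :
    ∃ t, ¬ distinguishable δ M.out i b (Function.update v i t) := by
  obtain ⟨T, hT⟩ := hincr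
  set ℓ := max (M.pay b v i) 0 + 1
  have hℓ : 0 < ℓ := by positivity
  set t := T ℓ b fun j => v j.1
  refine ⟨t, fun hdist => ?_⟩
  have hrestrict : (fun j : {j // j ≠ i} => Function.update v i t j.1) = fun j => v j.1 :=
    funext fun j => Function.update_of_ne j.2 _ _
  have hloss := hT ℓ hℓ b (Function.update v i t) (by simp [hrestrict, t]) hdist
  have hIR' := hIR b (Function.update v i t) i
  have hpay := pay_update_le_of_truthfulAt hind hv htr t
  simp only [Function.update_self] at hloss hIR'
  linarith [le_max_left (M.pay b v i) 0]

end Mechanism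

theorem main_impossibility_general (n : ℕ) (hn : 1 ≤ n) (M : Mech n)
    (lam : ∀ i : Fin n, LossFn n i)
    (δ : ℝ) (hδ : δ ≤ 1 / (6 * n))
    (hindiff : ∀ i : Fin n, respectsIndifference M (lam i))
    (hincr : ∀ i : Fin n, increasingFor M (lam i) δ)
    (hIR : indivRational M lam)
    (htruth : ∀ (b : Fin n → Bool) (v : Fin n → ℝ) (i : Fin n), v i = 0 →
      truthfulAt M (lam i) b v) :
    ¬ (accurate M (1/2) (1/2) (1/3) (fun _ => false) (fun _ => 0) ∧
       accurate M (1/2) (1/2) (1/3) (fun _ => true) (fun _ => 0)) := by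
  rintro ⟨h0, h1⟩
  have hn' : (0 : ℝ) < n := by exact_mod_cast hn
  have hfar := one_sub_two_mul_le_tvDist_out_of_accurate (by omega) le_rfl h0 h1
  obtain ⟨b, i, hstep⟩ := exists_tvDist_update_true_ge (fun b => M.out b fun _ => 0) hn
  obtain ⟨t, hnot⟩ := exists_not_distinguishable_update (v := fun _ => 0) hIR (hindiff i)
    (hincr i) rfl (htruth b _ i rfl)
  refine hnot (distinguishable_update_of_two_mul_le_tvDist (c := true) ?_ t)
  calc 2 * δ ≤ (1 - 2 * (1 / 3)) / n := by
        rw [le_div_iff₀ hn']; rw [le_div_iff₀ (by positivity)] at hδ; linarith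
    _ ≤ _ := (div_le_div_of_nonneg_right hfar hn'.le).trans hstep

/-- **Main impossibility result (Theorem 3.1).** -/
theorem main_impossibility (n : ℕ) (hn : 1 ≤ n) (M : Mech n)
    (lam : ∀ i : Fin n, LossFn n i)
    (hnonneg : ∀ (i : Fin n) b v v'i s p, 0 ≤ lam i b v v'i s p)
    (δ : ℝ) (hδ : δ ≤ 1 / (6 * n))
    (hindiff : ∀ i : Fin n, respectsIndifference M (lam i))
    (hincr : ∀ i : Fin n, increasingFor M (lam i) δ)
    (hIR : indivRational M lam)
    (hfin : ∀ (b : Fin n → Bool) (i : Fin n),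
      Integrable (fun p => p i) ((M.payPMF b (fun _ => 0)).toMeasure))
    (htruth : ∀ (b : Fin n → Bool) (v : Fin n → ℝ) (i : Fin n), v i = 0 →
      truthfulAt M (lam i) b v) :
    ¬ (accurate M (1/2) (1/2) (1/3) (fun _ => false) (fun _ => 0) ∧
       accurate M (1/2) (1/2) (1/3) (fun _ => true) (fun _ => 0)) :=
  main_impossibility_general n hn M lam δ hδ hindiff hincr hIR htruth
end
end

section
/- The geometric mechanism is ε-differentially private. Fix ε > 0 and n ≥ 1, and let Geom(ε) be the symmetric geometric distribution on ℤ. Then the randomized function f(b) = Σ_{i=1}^n b_i + X, where X ← Geom(ε) and b ∈ {0,1}^n, is ε-differentially private: for all b, b' ∈ {0,1}^n differing in exactly one coordinate and every subset S ⊆ ℤ, Pr[f(b) ∈ S] ≤ e^ε · Pr[f(b') ∈ S]. -/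
open MeasureTheory
open scoped ENNReal

noncomputable section

attribute [local instance] Classical.propDecidable

/-!
Changing one data bit moves the sum `c` of the bits by at most one, so the two outputs are
translates `c + X` and `c' + X` of the same noise with `|c - c'| ≤ 1`. The point masses of
`Geom(ε)` satisfy `G x ≤ e^{ε |x - y|} G y`, so the output probabilities satisfy
`Pr[c + X = s] ≤ e^ε Pr[c' + X = s]` pointwise, and summing over `s ∈ S` gives the claim.
-/

open Real in
lemma isGeom.apply_le {ε : ℝ} (hε : 0 ≤ ε) {G : PMF ℤ} (hG : isGeom ε G) (x y : ℤ) :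
    G x ≤ ENNReal.ofReal (exp (ε * |((y - x : ℤ) : ℝ)|)) * G y := by
  rw [hG x, hG y, ← ENNReal.ofReal_mul (exp_pos _).le]
  refine ENNReal.ofReal_le_ofReal ?_
  have hcoeff : 0 ≤ (1 - exp (-ε)) / (1 + exp (-ε)) :=
    div_nonneg (by simp [exp_le_one_iff.mpr (neg_nonpos.mpr hε)]) (by positivity)
  have hexp : exp (-ε * |(x : ℝ)|) ≤ exp (ε * |((y - x : ℤ) : ℝ)|) * exp (-ε * |(y : ℝ)|) := by
    rw [← exp_add, exp_le_exp]
    have := mul_le_mul_of_nonneg_left (abs_sub_abs_le_abs_sub (y : ℝ) x) hε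
    push_cast
    linarith
  calc _ ≤ (1 - exp (-ε)) / (1 + exp (-ε)) *
        (exp (ε * |((y - x : ℤ) : ℝ)|) * exp (-ε * |(y : ℝ)|)) := by gcongr
    _ = _ := by ring

lemma PMF.map_add_left_apply {α : Type*} [AddGroup α] (p : PMF α) (a x : α) :
    p.map (a + ·) x = p (-a + x) := by
  rw [PMF.map_apply, tsum_eq_single (-a + x)]
  · simp
  · intro y hy
    rw [if_neg]
    rintro rfl
    simp at hy

lemma PMF.toOuterMeasure_apply_le_mul {α : Type*} {p q : PMF α} {c : ℝ≥0∞}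
    (h : ∀ x, p x ≤ c * q x) (s : Set α) :
    p.toOuterMeasure s ≤ c * q.toOuterMeasure s := by
  rw [PMF.toOuterMeasure_apply, PMF.toOuterMeasure_apply, ← ENNReal.tsum_mul_left]
  refine ENNReal.tsum_le_tsum fun x => ?_
  by_cases hx : x ∈ s <;> simp [hx, h x]

lemma abs_sum_boole_sub_sum_boole_le_one {ι : Type*} [Fintype ι] {b b' : ι → Bool} {i : ι}
    (hag : ∀ j, j ≠ i → b j = b' j) :
    |(∑ j, if b j then (1 : ℤ) else 0) - ∑ j, if b' j then (1 : ℤ) else 0| ≤ 1 := by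
  rw [← Finset.sum_sub_distrib, Finset.sum_eq_single i (fun j _ hj => by simp [hag j hj])
    (by simp)]
  cases b i <;> cases b' i <;> simp

theorem geom_mechanism_dp_general (n : ℕ) (ε : ℝ) (hε : 0 < ε)
    (G : PMF ℤ) (hG : isGeom ε G)
    (b b' : Fin n → Bool) (i : Fin n)
    (hag : ∀ j, j ≠ i → b j = b' j)
    (S : Set ℤ) :
    (G.map (fun x => (∑ j, if b j then (1 : ℤ) else 0) + x)).toOuterMeasure S ≤
      ENNReal.ofReal (Real.exp ε) *
        (G.map (fun x => (∑ j, if b' j then (1 : ℤ) else 0) + x)).toOuterMeasure S := by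
  set c := ∑ j, if b j then (1 : ℤ) else 0
  set c' := ∑ j, if b' j then (1 : ℤ) else 0
  have hcc' : |c - c'| ≤ 1 := abs_sum_boole_sub_sum_boole_le_one hag
  refine PMF.toOuterMeasure_apply_le_mul (fun s => ?_) S
  rw [PMF.map_add_left_apply, PMF.map_add_left_apply]
  calc G (-c + s)
      ≤ ENNReal.ofReal (Real.exp (ε * |((-c' + s - (-c + s) : ℤ) : ℝ)|)) * G (-c' + s) :=
        hG.apply_le hε.le _ _
    _ ≤ ENNReal.ofReal (Real.exp ε) * G (-c' + s) := by
        rw [show -c' + s - (-c + s) = c - c' by ring, ← Int.cast_abs]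
        gcongr
        exact mul_le_of_le_one_right hε.le (by exact_mod_cast hcc')

/-- **The geometric mechanism is `ε`-differentially private.** -/
theorem geom_mechanism_dp (n : ℕ) (hn : 1 ≤ n) (ε : ℝ) (hε : 0 < ε)
    (G : PMF ℤ) (hG : isGeom ε G)
    (b b' : Fin n → Bool) (i : Fin n)
    (hne : b i ≠ b' i) (hag : ∀ j, j ≠ i → b j = b' j)
    (S : Set ℤ) :
    (G.map (fun x => (∑ j, if b j then (1 : ℤ) else 0) + x)).toOuterMeasure S ≤
      ENNReal.ofReal (Real.exp ε) *
        (G.map (fun x => (∑ j, if b' j then (1 : ℤ) else 0) + x)).toOuterMeasure S :=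
  geom_mechanism_dp_general n ε hε G hG b b' i hag S
end
end

section
/- Distinguishability bound for the subsampling mechanism (Section 3.1). Fix n ≥ 1 and 1 ≤ k ≤ n. Define the randomized function f on {0,1}^n by: draw a uniformly random k-element subset A of {1,…,n} and output Σ_{i∈A} b_i. Then for every i and every pair b, b' ∈ {0,1}^n that agree on all coordinates j ≠ i, the total variation distance satisfies Δ(f(b), f(b')) ≤ k/n. -/
open MeasureTheory
open scoped ENNReal

noncomputable section

attribute [local instance] Classical.propDecidable

/-!
Both output distributions are pushforwards of the same random subset `A` by maps that agree
unless `i ∈ A`, so no event changes probability by more than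
`Pr[i ∈ A] = C(n-1, k-1) / C(n, k) = k / n`.
-/

open Finset

namespace PMF

variable {α β : Type*}

theorem toOuterMeasure_ne_top (p : PMF α) (s : Set α) : p.toOuterMeasure s ≠ ∞ :=
  toOuterMeasure_apply p s ▸ p.tsum_coe_indicator_ne_top s

theorem toOuterMeasure_map_le_add_of_eqOn_compl (p : PMF β) {u v : β → α} {T : Set β}
    (huv : Set.EqOn u v Tᶜ) (S : Set α) :
    (p.map u).toOuterMeasure S ≤ (p.map v).toOuterMeasure S + p.toOuterMeasure T := by
  have hsub : u ⁻¹' S ⊆ v ⁻¹' S ∪ T := fun x hx => by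
    by_cases hxT : x ∈ T
    · exact Or.inr hxT
    · exact Or.inl (show v x ∈ S from huv hxT ▸ hx)
  rw [toOuterMeasure_map_apply, toOuterMeasure_map_apply]
  exact (p.toOuterMeasure.mono hsub).trans (measure_union_le _ _)

theorem tvDist_map_le_of_eqOn_compl (p : PMF β) {u v : β → α} {T : Set β}
    (huv : Set.EqOn u v Tᶜ) :
    tvDist (p.map u) (p.map v) ≤ (p.toOuterMeasure T).toReal := by
  have toReal_le {u v : β → α} (huv : Set.EqOn u v Tᶜ) (S : Set α) :
      ((p.map u).toOuterMeasure S).toReal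
        ≤ ((p.map v).toOuterMeasure S).toReal + (p.toOuterMeasure T).toReal := by
    rw [← ENNReal.toReal_add (toOuterMeasure_ne_top _ _) (toOuterMeasure_ne_top _ _)]
    exact ENNReal.toReal_mono
      (ENNReal.add_ne_top.mpr ⟨toOuterMeasure_ne_top _ _, toOuterMeasure_ne_top _ _⟩)
      (p.toOuterMeasure_map_le_add_of_eqOn_compl huv S)
  refine ciSup_le fun S => abs_sub_le_iff.mpr ⟨?_, ?_⟩
  · linarith [toReal_le huv S]
  · linarith [toReal_le huv.symm S]

end PMF

section UniformSubset

variable {α : Type*} [Fintype α] [DecidableEq α]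

theorem card_filter_mem_powersetCard_univ {k : ℕ} (hk : 1 ≤ k) (a : α) :
    #{A ∈ powersetCard k (univ : Finset α) | a ∈ A} = (Fintype.card α - 1).choose (k - 1) := by
  simpa using card_filter_powersetCard_subset {a} univ k (subset_univ _) (by simpa using hk)

theorem toOuterMeasure_setOf_mem_of_uniform {k : ℕ} (hk1 : 1 ≤ k)
    (hkn : k ≤ Fintype.card α) (U : PMF (Finset α))
    (hU : ∀ A : Finset α, U A = if #A = k then (((Fintype.card α).choose k : ℝ≥0∞))⁻¹ else 0)
    (a : α) :
    (U.toOuterMeasure {A | a ∈ A}).toReal = k / Fintype.card α := by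
  set N := Fintype.card α
  have hmass : U.toOuterMeasure {A | a ∈ A}
      = ((N - 1).choose (k - 1) : ℝ≥0∞) * (N.choose k : ℝ≥0∞)⁻¹ := by
    rw [PMF.toOuterMeasure_apply_fintype, ← card_filter_mem_powersetCard_univ hk1 a,
      ← nsmul_eq_mul, ← sum_const, sum_filter, powersetCard_eq_filter, powerset_univ, sum_filter]
    refine sum_congr rfl fun A _ => ?_
    by_cases hA : a ∈ A <;> simp [hA, hU]
  have hpascal : (N * (N - 1).choose (k - 1) : ℝ) = N.choose k * k := by
    have := Nat.add_one_mul_choose_eq (N - 1) (k - 1)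
    rw [Nat.sub_add_cancel hk1, Nat.sub_add_cancel (hk1.trans hkn)] at this
    exact_mod_cast this
  have hN : (N : ℝ) ≠ 0 := Nat.cast_ne_zero.mpr (by omega)
  have hchoose : (N.choose k : ℝ) ≠ 0 := Nat.cast_ne_zero.mpr (Nat.choose_pos hkn).ne'
  rw [hmass, ENNReal.toReal_mul, ENNReal.toReal_inv]
  simp only [ENNReal.toReal_natCast]
  field_simp
  linarith

end UniformSubset

/-- **Distinguishability bound for the subsampling mechanism (Section 3.1).** -/
theorem subsampling_distinguishability (n k : ℕ) (hk1 : 1 ≤ k) (hkn : k ≤ n)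
    (U : PMF (Finset (Fin n)))
    (hU : ∀ A : Finset (Fin n),
      U A = if A.card = k then ((n.choose k : ℝ≥0∞))⁻¹ else 0)
    (i : Fin n) (b b' : Fin n → Bool) (hag : ∀ j, j ≠ i → b j = b' j) :
    tvDist (U.map (fun A => ∑ j ∈ A, if b j then (1 : ℤ) else 0))
        (U.map (fun A => ∑ j ∈ A, if b' j then (1 : ℤ) else 0)) ≤ (k : ℝ) / n := by
  have hsums : Set.EqOn (fun A => ∑ j ∈ A, if b j then (1 : ℤ) else 0)
      (fun A => ∑ j ∈ A, if b' j then (1 : ℤ) else 0) {A | i ∈ A}ᶜ := fun A hA =>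
    sum_congr rfl fun j hj => by rw [hag j (by rintro rfl; exact hA hj)]
  calc _ ≤ (U.toOuterMeasure {A | i ∈ A}).toReal := U.tvDist_map_le_of_eqOn_compl hsums
    _ = k / n := by
      simpa using toOuterMeasure_setOf_mem_of_uniform hk1 (by simpa using hkn) U
        (by simpa using hU) i
end
end

section
/- Perfect privacy for high-valuation players under the monotonic-valuations mechanism (used in the proof of Theorem 4.2). Fix B > 0, ε > 0 and n ≥ 1, and let M_{B,ε} be the monotonic-valuations mechanism. Let (b,v) be any input and i a player with 2εv_i > B/n. Then for every monotonic i-neighbor (b',v') of (b,v), the distributions M_{-i}(b,v) and M_{-i}(b',v') are identical. -/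
open MeasureTheory
open scoped ENNReal

noncomputable section

attribute [local instance] Classical.propDecidable

/-- **Perfect privacy for high-valuation players under the monotonic-valuations
mechanism** (used in the proof of Theorem 4.2). -/
theorem monMech_perfect_privacy_high (n : ℕ) (hn : 1 ≤ n) (B ε : ℝ)
    (hB : 0 < B) (hε : 0 < ε) (G : PMF ℤ) (hG : isGeom ε G)
    (i : Fin n) (b : Fin n → Bool) (v : Fin n → ℝ)
    (hhigh : B / n < 2 * ε * v i)
    (y : (Fin n → Bool) × (Fin n → ℝ)) (hy : monINeighbor i (b, v) y) :
    (monMech n B ε G).minus i b v = (monMech n B ε G).minus i y.1 y.2 := by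
  obtain ⟨hnb, hmr⟩ := hy
  simp only [Mech.minus, monMech, PMF.map_comp]
  congr 1
  funext x
  simp only [Function.comp]
  congr 1
  · congr 1
    apply Finset.sum_congr rfl
    intro j _
    by_cases hj : j = i
    · subst hj
      rcases hmr with ⟨h1, h2, h3⟩ | ⟨h1, h2, h3⟩ <;> simp only at h1 h2 h3
      · have : B / n < 2 * ε * y.2 j := lt_of_lt_of_le hhigh
          (by nlinarith)
        simp [h1, h2, not_le.mpr this]
      · simp [h1, h2, not_le.mpr hhigh]
    · obtain ⟨hb, hv⟩ := hnb j hj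
      replace hb : b j = y.1 j := hb
      replace hv : v j = y.2 j := hv
      rw [hb, hv]
  · funext j
    obtain ⟨hb, hv⟩ := hnb j.1 j.2
    replace hv : v j.1 = y.2 j.1 := hv
    rw [hv]
end
end
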